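/- arXiv:2401.02636 — 2 statements merged into one kernel-verified Lean document; each statement's English description precedes it below -/
import Mathlib

section
/- Suppose both i* and j* exist and i* ≤ j*. Then x(a) ≤ x(p_{j*}) ≤ x(b), and for every index i with i* ≤ i ≤ j* and x(pᵢ) > x(b) one has y(p_{j*}) < y(pᵢ). Consequently, every point of {p_{i*}, …, p_{j*}} at minimum distance from the line ℓ has its x-coordinate in the interval [x(a), x(b)]. -/
lemma coord_dist_le_aux (x y : EuclideanSpace ℝ (Fin 2)) : |x 1 - y 1| ≤ dist x y := by
  rw [EuclideanSpace.dist_eq, Fin.sum_univ_two]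
  rw [show |x 1 - y 1| = Real.sqrt ((x 1 - y 1) ^ 2) from (Real.sqrt_sq_eq_abs _).symm]
  apply Real.sqrt_le_sqrt
  rw [Real.dist_eq, Real.dist_eq, sq_abs, sq_abs]
  nlinarith [sq_nonneg (x 0 - y 0)]

set_option maxHeartbeats 1000000 in
lemma infDist_horiz_line (q : EuclideanSpace ℝ (Fin 2)) (c : ℝ) :
    Metric.infDist q {z : EuclideanSpace ℝ (Fin 2) | z 1 = c} = |q 1 - c| := by
  have hz : (!₂[q 0, c] : EuclideanSpace ℝ (Fin 2)) ∈
      {z : EuclideanSpace ℝ (Fin 2) | z 1 = c} := rfl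
  apply le_antisymm
  · refine le_trans (Metric.infDist_le_dist_of_mem hz) (le_of_eq ?_)
    rw [EuclideanSpace.dist_eq, Fin.sum_univ_two]
    have e0 : (!₂[q 0, c] : EuclideanSpace ℝ (Fin 2)) 0 = q 0 := rfl
    have e1 : (!₂[q 0, c] : EuclideanSpace ℝ (Fin 2)) 1 = c := rfl
    rw [e0, e1, Real.dist_eq, Real.dist_eq, sub_self, abs_zero]
    rw [show (0:ℝ) ^ 2 + |q 1 - c| ^ 2 = (q 1 - c) ^ 2 by rw [sq_abs]; ring]
    exact Real.sqrt_sq_eq_abs _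
  · refine not_lt.mp fun hlt => ?_
    have hne : Set.Nonempty {z : EuclideanSpace ℝ (Fin 2) | z 1 = c} :=
      Set.nonempty_of_mem hz
    obtain ⟨z, hzm, hd⟩ := (Metric.infDist_lt_iff hne).mp hlt
    have h1 : |q 1 - z 1| ≤ dist q z := coord_dist_le_aux q z
    rw [Set.mem_setOf_eq] at hzm
    rw [hzm] at h1
    linarith

/-- Lemma: if both `i*` and `j*` exist and `i* ≤ j*`, then `x(a) ≤ x(p_{j*}) ≤ x(b)`,
every `pᵢ` with `i* ≤ i ≤ j*` lying strictly to the right of `b` is strictly higher than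
`p_{j*}`, and consequently every point of `{p_{i*}, …, p_{j*}}` at minimum distance from
the supporting line `ℓ` has its x-coordinate in `[x(a), x(b)]`. -/
theorem minimizer_x_coordinate_in_range
    (Q : Finset (EuclideanSpace ℝ (Fin 2)))
    (a b : EuclideanSpace ℝ (Fin 2))
    (hab : a 1 = b 1) (hxab : a 0 ≤ b 0)
    (hQabove : ∀ q ∈ Q, a 1 < q 1)
    (k : ℝ) (hk : k < 0)
    (u : EuclideanSpace ℝ (Fin 2)) (hu0 : u 0 = 1) (hu1 : u 1 = k)
    (v : EuclideanSpace ℝ (Fin 2))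
    (e : Set (EuclideanSpace ℝ (Fin 2)))
    (heL : ∀ q ∈ e, ∃ t : ℝ, q = v + t • u)
    (heSeg : ∃ c d : EuclideanSpace ℝ (Fin 2), e = segment ℝ c d)
    (heAbove : ∀ q ∈ e, a 1 ≤ q 1)
    (hQaboveL : ∀ q ∈ Q, v 1 + k * (q 0 - v 0) ≤ q 1)
    (m : ℕ) (p : ℕ → EuclideanSpace ℝ (Fin 2))
    (hpQ : ∀ i, 1 ≤ i → i ≤ m → p i ∈ Q)
    (hpInj : ∀ i j, 1 ≤ i → i ≤ m → 1 ≤ j → j ≤ m → i ≠ j → p i ≠ p j)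
    (hVor : ∀ i, 1 ≤ i → i ≤ m → ∃ q ∈ e, ∀ r ∈ Q, dist q (p i) ≤ dist q r)
    (hProjOrder : ∀ i j, 1 ≤ i → i < j → j ≤ m →
      (inner ℝ (p i) u : ℝ) < (inner ℝ (p j) u : ℝ))
    (hVorOrder : ∀ i j, 1 ≤ i → i < j → j ≤ m → ∀ q ∈ e, ∀ q' ∈ e,
      (∀ r ∈ Q, dist q (p i) ≤ dist q r) → (∀ r ∈ Q, dist q' (p j) ≤ dist q' r) →
      q 0 ≤ q' 0)
    (hVert : ∀ i, 1 ≤ i → i ≤ m → a 0 ≤ p i 0 → p i 0 ≤ b 0 → ∃ q ∈ e, q 0 = p i 0)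
    (jstar : ℕ) (hj1 : 1 ≤ jstar) (hjm : jstar ≤ m) (hjB : p jstar 0 ≤ b 0)
    (hjmax : ∀ j, 1 ≤ j → j ≤ m → p j 0 ≤ b 0 → j ≤ jstar)
    (istar : ℕ) (hi1 : 1 ≤ istar) (him : istar ≤ m)
    (hiA : ∀ j, istar ≤ j → j ≤ m → a 0 ≤ p j 0)
    (himin : ∀ i, 1 ≤ i → i ≤ m → (∀ j, i ≤ j → j ≤ m → a 0 ≤ p j 0) → istar ≤ i)
    (hij : istar ≤ jstar)
    : (a 0 ≤ p jstar 0 ∧ p jstar 0 ≤ b 0) ∧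
    (∀ i, istar ≤ i → i ≤ jstar → b 0 < p i 0 → p jstar 1 < p i 1) ∧
    (∀ i, istar ≤ i → i ≤ jstar →
      (∀ i', istar ≤ i' → i' ≤ jstar →
        Metric.infDist (p i) {z : EuclideanSpace ℝ (Fin 2) | z 1 = a 1} ≤
        Metric.infDist (p i') {z : EuclideanSpace ℝ (Fin 2) | z 1 = a 1}) →
      a 0 ≤ p i 0 ∧ p i 0 ≤ b 0) := by
  have hinner : ∀ x : EuclideanSpace ℝ (Fin 2), (inner ℝ x u : ℝ) = x 0 + x 1 * k := by
    intro x
    rw [PiLp.inner_apply, Fin.sum_univ_two]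
    simp [RCLike.inner_apply, hu0, hu1, mul_comm]
  have part2 : ∀ i, istar ≤ i → i ≤ jstar → b 0 < p i 0 → p jstar 1 < p i 1 := by
    intro i hi1' hi2' hb
    have hne : i ≠ jstar := by rintro rfl; exact absurd hjB (not_le.mpr hb)
    have hilt : i < jstar := lt_of_le_of_ne hi2' hne
    have h1i : 1 ≤ i := le_trans hi1 hi1'
    have hproj := hProjOrder i jstar h1i hilt hjm
    rw [hinner, hinner] at hproj
    nlinarith
  refine ⟨⟨hiA jstar hij hjm, hjB⟩, part2, ?_⟩
  intro i hi1' hi2' hmin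
  refine ⟨hiA i hi1' (le_trans hi2' hjm), ?_⟩
  by_contra hb
  push_neg at hb
  have hy := part2 i hi1' hi2' hb
  have hmin' := hmin jstar hij le_rfl
  rw [infDist_horiz_line, infDist_horiz_line] at hmin'
  have h1 : a 1 < p i 1 := hQabove _ (hpQ i (le_trans hi1 hi1') (le_trans hi2' hjm))
  have h2 : a 1 < p jstar 1 := hQabove _ (hpQ jstar hj1 hjm)
  rw [abs_of_pos (by linarith), abs_of_pos (by linarith)] at hmin'
  linarith
end

section
/- Suppose i* exists. Then for every index i with i < i* and x(a) ≤ x(pᵢ) ≤ x(b), the point pᵢ is not the unique closest point of s in Q. (This is part (2) of the proof that the closest point of s in Q must lie in Q_e[i*, j*].) -/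
lemma euclid_dist_two (x y : EuclideanSpace ℝ (Fin 2)) :
    dist x y = Real.sqrt ((x 0 - y 0)^2 + (x 1 - y 1)^2) := by
  rw [EuclideanSpace.dist_eq, Fin.sum_univ_two]
  simp [Real.dist_eq, sq_abs]

lemma euclid_coord_le_dist (x y : EuclideanSpace ℝ (Fin 2)) (i : Fin 2) :
    |x i - y i| ≤ dist x y := by
  rw [EuclideanSpace.dist_eq, ← Real.sqrt_sq_eq_abs]
  apply Real.sqrt_le_sqrt
  refine Finset.single_le_sum (f := fun j => dist (x j) (y j)^2)
    (fun j _ => by positivity) (Finset.mem_univ i) |>.trans_eq' ?_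
  simp [Real.dist_eq, sq_abs]

lemma seg_coord1 (a b : EuclideanSpace ℝ (Fin 2)) (hab : a 1 = b 1) :
    ∀ z ∈ segment ℝ a b, z 1 = a 1 := by
  intro z hz
  rw [segment_eq_image'] at hz
  obtain ⟨t, _, rfl⟩ := hz
  show (a + t • (b - a)) 1 = a 1
  have : (a + t • (b - a)) 1 = a 1 + t * (b 1 - a 1) := by simp
  rw [this, ← hab]; ring

lemma seg_point (a b : EuclideanSpace ℝ (Fin 2)) (hab : a 1 = b 1)
    (x : ℝ) (h1 : a 0 ≤ x) (h2 : x ≤ b 0) :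
    ∃ f ∈ segment ℝ a b, f 0 = x ∧ f 1 = a 1 := by
  rcases eq_or_lt_of_le (le_trans h1 h2 : a 0 ≤ b 0) with heq | hlt
  · exact ⟨a, left_mem_segment ℝ a b, le_antisymm h1 (by linarith), rfl⟩
  · set t := (x - a 0) / (b 0 - a 0) with ht
    have hden : 0 < b 0 - a 0 := by linarith
    refine ⟨a + t • (b - a), ?_, ?_, ?_⟩
    · rw [segment_eq_image']
      exact ⟨t, ⟨div_nonneg (by linarith) hden.le, (div_le_one hden).2 (by linarith)⟩, rfl⟩
    · have : (a + t • (b - a)) 0 = a 0 + t * (b 0 - a 0) := by simp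
      rw [this, ht]; field_simp; ring
    · have : (a + t • (b - a)) 1 = a 1 + t * (b 1 - a 1) := by simp
      rw [this, ← hab]; ring

set_option maxHeartbeats 1000000

/-- Lemma (part (2)): if `i*` exists, then for every index `i < i*` with
`x(a) ≤ x(pᵢ) ≤ x(b)`, the point `pᵢ` is not the unique closest point of the segment
`s` in `Q`. -/
theorem points_before_istar_not_closest
    (Q : Finset (EuclideanSpace ℝ (Fin 2)))
    (a b : EuclideanSpace ℝ (Fin 2))
    (hab : a 1 = b 1) (hxab : a 0 ≤ b 0)
    (hQabove : ∀ q ∈ Q, a 1 < q 1)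
    (k : ℝ) (hk : k < 0)
    (u : EuclideanSpace ℝ (Fin 2)) (hu0 : u 0 = 1) (hu1 : u 1 = k)
    (v : EuclideanSpace ℝ (Fin 2))
    (e : Set (EuclideanSpace ℝ (Fin 2)))
    (heL : ∀ q ∈ e, ∃ t : ℝ, q = v + t • u)
    (heSeg : ∃ c d : EuclideanSpace ℝ (Fin 2), e = segment ℝ c d)
    (heAbove : ∀ q ∈ e, a 1 ≤ q 1)
    (hQaboveL : ∀ q ∈ Q, v 1 + k * (q 0 - v 0) ≤ q 1)
    (m : ℕ) (p : ℕ → EuclideanSpace ℝ (Fin 2))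
    (hpQ : ∀ i, 1 ≤ i → i ≤ m → p i ∈ Q)
    (hpInj : ∀ i j, 1 ≤ i → i ≤ m → 1 ≤ j → j ≤ m → i ≠ j → p i ≠ p j)
    (hVor : ∀ i, 1 ≤ i → i ≤ m → ∃ q ∈ e, ∀ r ∈ Q, dist q (p i) ≤ dist q r)
    (hProjOrder : ∀ i j, 1 ≤ i → i < j → j ≤ m →
      (inner ℝ (p i) u : ℝ) < (inner ℝ (p j) u : ℝ))
    (hVorOrder : ∀ i j, 1 ≤ i → i < j → j ≤ m → ∀ q ∈ e, ∀ q' ∈ e,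
      (∀ r ∈ Q, dist q (p i) ≤ dist q r) → (∀ r ∈ Q, dist q' (p j) ≤ dist q' r) →
      q 0 ≤ q' 0)
    (hVert : ∀ i, 1 ≤ i → i ≤ m → a 0 ≤ p i 0 → p i 0 ≤ b 0 → ∃ q ∈ e, q 0 = p i 0)
    (istar : ℕ) (hi1 : 1 ≤ istar) (him : istar ≤ m)
    (hiA : ∀ j, istar ≤ j → j ≤ m → a 0 ≤ p j 0)
    (himin : ∀ i, 1 ≤ i → i ≤ m → (∀ j, i ≤ j → j ≤ m → a 0 ≤ p j 0) → istar ≤ i)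
    : ∀ i, 1 ≤ i → i < istar → a 0 ≤ p i 0 → p i 0 ≤ b 0 →
      ¬ (∀ r ∈ Q, r ≠ p i →
          Metric.infDist (p i) (segment ℝ a b) < Metric.infDist r (segment ℝ a b)) := by
  intro i hi1' hiistar hax hxb h
  have him' : i ≤ m := le_trans hiistar.le him
  -- obtain j > i with `p j 0 < a 0`
  have hnot : ¬ (∀ j, i ≤ j → j ≤ m → a 0 ≤ p j 0) := fun hall =>
    absurd (himin i hi1' him' hall) (by omega)
  push_neg at hnot
  obtain ⟨j, hij, hjm, hja⟩ := hnot
  have hji : i < j := lt_of_le_of_ne hij (by rintro rfl; linarith)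
  have hpjQ := hpQ j (le_trans hi1' hij) hjm
  have hpiQ := hpQ i hi1' him'
  have hne : p j ≠ p i := hpInj j i (le_trans hi1' hij) hjm hi1' him' (by omega)
  -- projection order in coordinates
  have hproj : p i 0 + p i 1 * k < p j 0 + p j 1 * k := by
    have := hProjOrder i j hi1' hji hjm
    simpa [PiLp.inner_apply, Fin.sum_univ_two, hu0, hu1, mul_comm] using this
  -- the point w of e directly below p i
  obtain ⟨w, hwE, hw0⟩ := hVert i hi1' him' hax hxb
  obtain ⟨t, hwt⟩ := heL w hwE
  have hw0' : w 0 = v 0 + t := by rw [hwt]; simp [hu0]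
  have hw1 : w 1 = v 1 + t * k := by rw [hwt]; simp [hu1]
  have hw1' : w 1 = v 1 + k * (p i 0 - v 0) := by rw [hw1, ← hw0, hw0']; ring
  -- basic inequalities
  have hA : 0 < p i 0 - p j 0 := by linarith
  have hBa := hQaboveL _ hpjQ
  have hB : (-k) * (p i 0 - p j 0) ≤ p j 1 - w 1 := by rw [hw1']; nlinarith
  have hBpos : 0 < p j 1 - w 1 := lt_of_lt_of_le (by nlinarith) hB
  have hD : (p i 0 - p j 0) < (-k) * (p i 1 - p j 1) := by nlinarith
  have hXpos : 0 < p i 1 - p j 1 := by nlinarith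
  have hwpi : w 1 ≤ p i 1 := by
    have := hQaboveL _ hpiQ; rw [hw1']; linarith
  -- key estimate : dist (p j) w ≤ p i 1 - w 1
  have hkey : dist (p j) w ≤ p i 1 - w 1 := by
    rw [euclid_dist_two]
    have hsq : (p j 0 - w 0)^2 + (p j 1 - w 1)^2 ≤ (p i 1 - w 1)^2 := by
      rw [hw0]
      nlinarith [mul_pos (sub_pos.2 hD) hBpos, mul_nonneg hA.le (sub_nonneg.2 hB),
        mul_pos hXpos hBpos, sq_nonneg (p i 0 - p j 0)]
    calc Real.sqrt ((p j 0 - w 0)^2 + (p j 1 - w 1)^2)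
        ≤ Real.sqrt ((p i 1 - w 1)^2) := Real.sqrt_le_sqrt hsq
      _ = |p i 1 - w 1| := Real.sqrt_sq_eq_abs _
      _ = p i 1 - w 1 := abs_of_nonneg (by linarith)
  -- the foot f of p i on the segment
  obtain ⟨f, hfmem, hf0, hf1⟩ := seg_point a b hab (p i 0) hax hxb
  have hwa : a 1 ≤ w 1 := heAbove w hwE
  have hdistwf : dist w f = w 1 - a 1 := by
    rw [euclid_dist_two, hf0, ← hw0, hf1]
    simp only [sub_self]
    rw [show (0:ℝ)^2 + (w 1 - a 1)^2 = (w 1 - a 1)^2 by ring, Real.sqrt_sq_eq_abs,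
      abs_of_nonneg (by linarith)]
  -- lower bound on infDist of p i
  have hinfi : p i 1 - a 1 ≤ Metric.infDist (p i) (segment ℝ a b) := by
    by_contra hcon
    push_neg at hcon
    rw [Metric.infDist_lt_iff ⟨a, left_mem_segment ℝ a b⟩] at hcon
    obtain ⟨z, hz, hzd⟩ := hcon
    have hz1 := seg_coord1 a b hab z hz
    have h2 := euclid_coord_le_dist (p i) z 1
    rw [hz1] at h2
    have := le_trans (le_abs_self _) h2
    linarith
  -- upper bound on infDist of p j
  have hinfj : Metric.infDist (p j) (segment ℝ a b) ≤ p i 1 - a 1 := by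
    calc Metric.infDist (p j) (segment ℝ a b) ≤ dist (p j) f :=
          Metric.infDist_le_dist_of_mem hfmem
      _ ≤ dist (p j) w + dist w f := dist_triangle _ _ _
      _ ≤ (p i 1 - w 1) + (w 1 - a 1) := by rw [hdistwf]; linarith
      _ = p i 1 - a 1 := by ring
  have := h (p j) hpjQ hne
  linarith
end
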